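/- arXiv:2511.01349 — 4 statements merged into one kernel-verified Lean document; each statement's English description precedes it below -/
import Mathlib

section
/- For each nonzero ξ ∈ ℝⁿ and V₀ ≥ 0, the block matrix A(ξ) acting on ℂⁿ ⊕ ℂ, with upper-left block |ξ|²·Id + ξξᵀ (i.e. |ξ|² plus the rank-one operator v ↦ (ξ·v)ξ), upper-right block iξ, lower-left block −iξᵀ, and lower-right scalar block −V₀, is invertible, and its inverse is the block matrix with upper-left block (1/|ξ|²)·Id − ((V₀+1)/((2V₀+1)|ξ|⁴))·ξξᵀ, upper-right block (i/((2V₀+1)|ξ|²))·ξ, lower-left block −(i/((2V₀+1)|ξ|²))·ξᵀ, and lower-right scalar −2/(2V₀+1). -/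
/-!
Both the symbol and its claimed inverse have the form
`(v, t) ↦ (a v + (b ⟨ξ, v⟩ + c t) ξ, e ⟨ξ, v⟩ + f t)`. Such maps are closed under composition,
with parameters computed from `⟨ξ, ξ⟩ = |ξ|²`, so both identities reduce to five scalar identities
each, which hold as soon as `|ξ|² ≠ 0` and `2 V₀ + 1 ≠ 0`.
-/

open Complex

section RankOneBlock

variable {R : Type*} [CommRing R] {n : ℕ}

def rankOneBlock (ξ : Fin n → R) (a b c e f : R) (w : (Fin n → R) × R) : (Fin n → R) × R :=
  (a • w.1 + (b * ξ ⬝ᵥ w.1 + c * w.2) • ξ, e * ξ ⬝ᵥ w.1 + f * w.2)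

theorem rankOneBlock_comp {ξ : Fin n → R} {q : R} (hq : ξ ⬝ᵥ ξ = q)
    (a b c e f a' b' c' e' f' : R) (w : (Fin n → R) × R) :
    rankOneBlock ξ a b c e f (rankOneBlock ξ a' b' c' e' f' w) =
      rankOneBlock ξ (a * a') (a * b' + b * a' + b * b' * q + c * e')
        (a * c' + b * c' * q + c * f') (e * a' + e * b' * q + f * e') (e * c' * q + f * f') w := by
  simp only [rankOneBlock, dotProduct_add, dotProduct_smul, hq, smul_eq_mul, smul_add, smul_smul,
    Prod.mk.injEq]
  constructor
  · module
  · ring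

theorem rankOneBlock_eq_self (ξ : Fin n → R) {a b c e f : R} (ha : a = 1) (hb : b = 0)
    (hc : c = 0) (he : e = 0) (hf : f = 1) (w : (Fin n → R) × R) :
    rankOneBlock ξ a b c e f w = w := by
  subst ha hb hc he hf
  simp [rankOneBlock]

end RankOneBlock

/-- The `(s,t)`-principal symbol of the generalized Stokes operator, as a map on `ℂⁿ ⊕ ℂ`. -/
theorem stokes_symbol_invertible (n : ℕ) (ξ : Fin n → ℝ) (hξ : ξ ≠ 0)
    (V₀ : ℝ) (hV₀ : 0 ≤ V₀) :
    ∀ u : (Fin n → ℂ) × ℂ,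
      (let q : ℝ := ∑ i, ξ i ^ 2
       let dot : (Fin n → ℂ) → ℂ := fun v => ∑ i, (ξ i : ℂ) * v i
       -- the symbol A(ξ)
       let A : (Fin n → ℂ) × ℂ → (Fin n → ℂ) × ℂ := fun w =>
         (fun i => (q : ℂ) * w.1 i + dot w.1 * (ξ i : ℂ) + Complex.I * (ξ i : ℂ) * w.2,
          -Complex.I * dot w.1 - (V₀ : ℂ) * w.2)
       -- the claimed inverse B(ξ)
       let B : (Fin n → ℂ) × ℂ → (Fin n → ℂ) × ℂ := fun w =>
         (fun i => ((1 / q : ℝ) : ℂ) * w.1 i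
            - (((V₀ + 1) / ((2 * V₀ + 1) * q ^ 2) : ℝ) : ℂ) * dot w.1 * (ξ i : ℂ)
            + Complex.I / ((((2 * V₀ + 1) : ℝ) : ℂ) * (q : ℂ)) * w.2 * (ξ i : ℂ),
          -(Complex.I / ((((2 * V₀ + 1) : ℝ) : ℂ) * (q : ℂ))) * dot w.1
            - ((2 / (2 * V₀ + 1) : ℝ) : ℂ) * w.2)
       A (B u) = u ∧ B (A u) = u) := by
  intro u q dot A B
  set ξc : Fin n → ℂ := fun i => (ξ i : ℂ)
  have hq : ξc ⬝ᵥ ξc = q := by simp [dotProduct, ξc, q, sq]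
  have hq0 : (q : ℂ) ≠ 0 := by
    obtain ⟨i, hi⟩ := Function.ne_iff.mp hξ
    have : 0 < q := Finset.sum_pos' (fun i _ => sq_nonneg (ξ i))
      ⟨i, Finset.mem_univ i, sq_pos_of_ne_zero hi⟩
    exact_mod_cast this.ne'
  have hV : (2 * V₀ + 1 : ℂ) ≠ 0 := by exact_mod_cast (by linarith : (0 : ℝ) < 2 * V₀ + 1).ne'
  have hA : A = rankOneBlock ξc q 1 I (-I) (-V₀) := by
    funext w
    refine Prod.ext (funext fun i => ?_) ?_ <;>
      simp only [A, rankOneBlock, dot, dotProduct, ξc, Pi.add_apply, Pi.smul_apply, smul_eq_mul] <;>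
      ring
  have hB : B = rankOneBlock ξc (1 / q) (-((V₀ + 1) / ((2 * V₀ + 1) * q ^ 2)))
      (I / ((2 * V₀ + 1) * q)) (-(I / ((2 * V₀ + 1) * q))) (-(2 / (2 * V₀ + 1))) := by
    funext w
    refine Prod.ext (funext fun i => ?_) ?_ <;>
      simp only [B, rankOneBlock, dot, dotProduct, ξc, Pi.add_apply, Pi.smul_apply, smul_eq_mul] <;>
      push_cast <;> ring
  rw [hA, hB, rankOneBlock_comp hq, rankOneBlock_comp hq]
  constructor <;> apply rankOneBlock_eq_self <;> grind [I_mul_I]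
end

section
/- Let V₀ ≥ 0, ξ' ∈ ℝⁿ⁻¹ nonzero, and e a unit vector orthogonal to ξ'. Then the endomorphism σ(ξ') := (i V₀)/(2(2V₀+1)|ξ'|) · (ξ' ⊗ e♯ − e ⊗ ξ'♯) of ℂⁿ (where (a ⊗ b♯)(v) := ⟨b, v⟩ a) is self-adjoint, and each of its eigenvalues λ satisfies |λ| ≤ V₀/(2(2V₀+1)); in particular |λ| < 1/4, so the operators ±(1/2)·Id + σ(ξ') are invertible. -/
/-!
With `A = ξ' ⊗ e♯ - e ⊗ ξ'♯`, one has `A³ = -G • A` where `G = |ξ'|²|e|² - ⟨ξ', e⟩²` is the Gram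
determinant, here `|ξ'|²`. Since `σ = c • A` with `c² |ξ'|² = -r²`, `r = V₀ / (2 (2 V₀ + 1))`,
this gives `σ³ = r² σ`, so every eigenvalue is a root of `X³ - r² X`, i.e. one of `0, ±r`.
Self-adjointness holds because `A` is real antisymmetric and `c` is purely imaginary.
-/

open Complex Matrix

open Polynomial in
theorem Polynomial.eval_eq_zero_of_mem_spectrum {𝕜 A : Type*} [Field 𝕜] [Ring A] [Algebra 𝕜 A]
    {a : A} {p : 𝕜[X]} (hp : aeval a p = 0) {μ : 𝕜} (hμ : μ ∈ spectrum 𝕜 a) :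
    p.eval μ = 0 := by
  have h := spectrum.subset_polynomial_aeval a p ⟨μ, hμ, rfl⟩
  rw [hp, spectrum.mem_iff, sub_zero] at h
  by_contra hne
  exact h ((isUnit_iff_ne_zero.mpr hne).map (algebraMap 𝕜 A))

open Polynomial in
theorem spectrum.norm_le_of_pow_three_eq_smul {𝕜 A : Type*} [RCLike 𝕜] [Ring A] [Algebra 𝕜 A]
    {a : A} {r : ℝ} (hr : 0 ≤ r) (ha : a ^ 3 = ((r : 𝕜) ^ 2) • a) {μ : 𝕜}
    (hμ : μ ∈ spectrum 𝕜 a) : ‖μ‖ ≤ r := by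
  have hroot : μ * (μ - r) * (μ + r) = 0 := by
    have := Polynomial.eval_eq_zero_of_mem_spectrum (p := X ^ 3 - C ((r : 𝕜) ^ 2) * X)
      (by simp [ha, Algebra.smul_def]) hμ
    simp only [eval_sub, eval_pow, eval_X, eval_mul, eval_C] at this
    linear_combination this
  rcases mul_eq_zero.mp hroot with h | h
  · rcases mul_eq_zero.mp h with h | h
    · simp [h, hr]
    · simp [sub_eq_zero.mp h, abs_of_nonneg hr]
  · simp [eq_neg_of_add_eq_zero_left h, abs_of_nonneg hr]

theorem isUnit_smul_one_add_of_neg_notMem_spectrum {𝕜 A : Type*} [CommRing 𝕜] [Ring A]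
    [Algebra 𝕜 A] {a : A} {t : 𝕜} (ht : -t ∉ spectrum 𝕜 a) : IsUnit (t • (1 : A) + a) := by
  have := (spectrum.notMem_iff.mp ht).neg
  rwa [neg_sub, map_neg, sub_neg_eq_add, add_comm, Algebra.algebraMap_eq_smul_one] at this

namespace Matrix

variable {n R : Type*} [CommRing R]

/-- The matrix of `x ⊗ y♯ - y ⊗ x♯`. -/
def wedge (x y : n → R) : Matrix n n R := vecMulVec x y - vecMulVec y x

theorem conjTranspose_wedge [StarRing R] (x y : n → R) :
    (wedge x y)ᴴ = wedge (star y) (star x) := by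
  simp [wedge, conjTranspose_sub]

theorem isHermitian_smul_wedge [StarRing R] {c : R} (hc : star c = -c) {x y : n → R}
    (hx : star x = x) (hy : star y = y) : (c • wedge x y).IsHermitian := by
  rw [IsHermitian, conjTranspose_smul, conjTranspose_wedge, hc, hx, hy, wedge, wedge, neg_smul,
    ← smul_neg, neg_sub]

variable [Fintype n]

theorem wedge_mulVec (x y v : n → R) : wedge x y *ᵥ v = (y ⬝ᵥ v) • x - (x ⬝ᵥ v) • y := by
  simp [wedge, sub_mulVec, vecMulVec_mulVec]

theorem wedge_pow_three [DecidableEq n] (x y : n → R) :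
    wedge x y ^ 3 = -((x ⬝ᵥ x) * (y ⬝ᵥ y) - (x ⬝ᵥ y) ^ 2) • wedge x y := by
  have hsq (v : n → R) : wedge x y *ᵥ (wedge x y *ᵥ v) =
      ((x ⬝ᵥ y) * (y ⬝ᵥ v) - (y ⬝ᵥ y) * (x ⬝ᵥ v)) • x
        + ((x ⬝ᵥ y) * (x ⬝ᵥ v) - (x ⬝ᵥ x) * (y ⬝ᵥ v)) • y := by
    simp only [wedge_mulVec, dotProduct_sub, dotProduct_smul, smul_eq_mul, dotProduct_comm y x]
    module
  refine ext_iff_mulVec.mpr fun v => ?_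
  rw [pow_succ, ← mulVec_mulVec, sq, ← mulVec_mulVec, hsq, smul_mulVec, wedge_mulVec]
  simp only [dotProduct_sub, dotProduct_smul, smul_eq_mul, dotProduct_comm y x]
  module

theorem smul_wedge_pow_three [DecidableEq n] (c : R) (x y : n → R) :
    (c • wedge x y) ^ 3 =
      -(c ^ 2 * ((x ⬝ᵥ x) * (y ⬝ᵥ y) - (x ⬝ᵥ y) ^ 2)) • (c • wedge x y) := by
  rw [smul_pow, wedge_pow_three, smul_smul, smul_smul]
  ring_nf

end Matrix

/-- The coefficient `i V₀ / (2 (2 V₀ + 1) |ξ'|)` of the symbol, with `s = |ξ'|²`. -/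
noncomputable def dlpSymbolCoeff (V₀ s : ℝ) : ℂ :=
  I * (V₀ : ℂ) / (2 * (2 * (V₀ : ℂ) + 1) * (√s : ℂ))

theorem star_dlpSymbolCoeff (V₀ s : ℝ) : star (dlpSymbolCoeff V₀ s) = -dlpSymbolCoeff V₀ s := by
  simp [dlpSymbolCoeff, neg_div]

theorem dlpSymbolCoeff_sq_mul {V₀ s : ℝ} (hV₀ : 0 ≤ V₀) (hs : 0 < s) :
    dlpSymbolCoeff V₀ s ^ 2 * s = -((V₀ / (2 * (2 * V₀ + 1)) : ℝ) : ℂ) ^ 2 := by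
  have hsqrt : (√s : ℂ) ≠ 0 := ofReal_ne_zero.mpr (Real.sqrt_ne_zero'.mpr hs)
  have hden : (2 * V₀ + 1 : ℂ) ≠ 0 := by exact_mod_cast (by linarith : 2 * V₀ + 1 ≠ 0)
  simp only [dlpSymbolCoeff]
  push_cast
  field_simp
  rw [I_sq, ← ofReal_pow √s, Real.sq_sqrt hs.le]
  ring

theorem div_two_mul_two_mul_add_one_lt_quarter {V₀ : ℝ} (hV₀ : 0 ≤ V₀) :
    V₀ / (2 * (2 * V₀ + 1)) < 1 / 4 := by
  rw [div_lt_iff₀ (by positivity)]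
  linarith

/-- Principal symbol of the boundary double layer operator `K`: self-adjointness,
eigenvalue bounds, and invertibility of `±1/2 + σ(ξ')`. -/
theorem dlp_symbol_selfAdjoint_eigenvalue_bound (n : ℕ) (V₀ : ℝ) (hV₀ : 0 ≤ V₀)
    (ξ' e : Fin n → ℝ) (hξ : ξ' ≠ 0) (he : ∑ i, e i ^ 2 = 1)
    (horth : ∑ i, ξ' i * e i = 0) :
    let nrm : ℝ := Real.sqrt (∑ i, ξ' i ^ 2)
    let c : ℂ := Complex.I * (V₀ : ℂ) / (2 * (2 * (V₀ : ℂ) + 1) * (nrm : ℂ))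
    let σ : Matrix (Fin n) (Fin n) ℂ :=
      Matrix.of fun i j => c * ((ξ' i : ℂ) * (e j : ℂ) - (e i : ℂ) * (ξ' j : ℂ))
    σ.IsHermitian ∧
    (∀ μ : ℂ, μ ∈ spectrum ℂ σ → ‖μ‖ ≤ V₀ / (2 * (2 * V₀ + 1))) ∧
    (∀ μ : ℂ, μ ∈ spectrum ℂ σ → ‖μ‖ < 1 / 4) ∧
    IsUnit ((1 / 2 : ℂ) • (1 : Matrix (Fin n) (Fin n) ℂ) + σ) ∧
    IsUnit (-(1 / 2 : ℂ) • (1 : Matrix (Fin n) (Fin n) ℂ) + σ) := by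
  intro nrm c σ
  have hee : e ⬝ᵥ e = 1 := by simpa [dotProduct, sq] using he
  have hξξ : ξ' ⬝ᵥ ξ' = ∑ i, ξ' i ^ 2 := by simp [dotProduct, sq]
  have hS : 0 < ∑ i, ξ' i ^ 2 := hξξ ▸ by simpa using dotProduct_self_star_pos_iff.mpr hξ
  have hσ : σ = dlpSymbolCoeff V₀ (∑ i, ξ' i ^ 2) • wedge (ofRealHom ∘ ξ') (ofRealHom ∘ e) := by
    ext i j
    simp [σ, c, nrm, dlpSymbolCoeff, wedge, vecMulVec_apply]
  have hcube : σ ^ 3 = ((V₀ / (2 * (2 * V₀ + 1)) : ℝ) : ℂ) ^ 2 • σ := by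
    rw [hσ, smul_wedge_pow_three, ← RingHom.map_dotProduct, ← RingHom.map_dotProduct,
      ← RingHom.map_dotProduct, hee, hξξ, show ξ' ⬝ᵥ e = 0 from horth, map_one, map_zero,
      mul_one, zero_pow two_ne_zero, sub_zero, ofRealHom_eq_coe, dlpSymbolCoeff_sq_mul hV₀ hS,
      neg_neg]
  have hbound (μ) (hμ : μ ∈ spectrum ℂ σ) : ‖μ‖ ≤ V₀ / (2 * (2 * V₀ + 1)) :=
    spectrum.norm_le_of_pow_three_eq_smul (div_nonneg hV₀ (by linarith)) hcube hμ
  have hquarter (μ) (hμ : μ ∈ spectrum ℂ σ) : ‖μ‖ < 1 / 4 :=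
    (hbound μ hμ).trans_lt (div_two_mul_two_mul_add_one_lt_quarter hV₀)
  have hhalf (μ : ℂ) (hμ : ‖μ‖ = 1 / 2) : μ ∉ spectrum ℂ σ := fun h => by
    linarith [hquarter μ h]
  refine ⟨hσ ▸ isHermitian_smul_wedge (star_dlpSymbolCoeff _ _) ?_ ?_, hbound, hquarter,
    isUnit_smul_one_add_of_neg_notMem_spectrum (hhalf _ (by simp)),
    isUnit_smul_one_add_of_neg_notMem_spectrum (hhalf _ (by simp))⟩ <;>
  · funext i
    simp
end

section
/- Let f := (V₀+1)/(2V₀+1), g := 1/(2V₀+1) with V₀ ≥ 0, and let ξ' ∈ ℝⁿ⁻¹ be nonzero. Then (1/(4π)) ∫_ℝ [ −2i( (1/(|ξ'|²+t²) − 2f t²/(|ξ'|²+t²)²) eₙ⊗ξ' + (g/(|ξ'|²+t²) − 2f t²/(|ξ'|²+t²)²) ξ'♯⊗eₙ♯ ) ] dt = (i V₀/(2(2V₀+1)|ξ'|)) (ξ'♯⊗eₙ♯ − eₙ⊗ξ'). -/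
/-!
Both coefficients are combinations `a / (s² + t²) - c t² / (s² + t²)²` with `s = |ξ'|`. Scaling
`t = s u` reduces them to `∫ (1 + u²)⁻¹ = π` and `∫ u² / (1 + u²)² = π / 2`, the latter from the
antiderivative `(arctan u - u / (1 + u²)) / 2`, so the combination integrates to `(a - c / 2) π / s`.
With `c = 2f` this gives `(1 - f) π / s = V₀ π / ((2V₀ + 1) s)` for `eₙ ⊗ ξ'` and its negative
`(g - f) π / s` for `ξ'♯ ⊗ eₙ♯`.
-/

open Complex MeasureTheory Real Filter Topology

lemma tendsto_div_one_add_sq {l : Filter ℝ} (hl : Tendsto (fun t : ℝ => t⁻¹) l (𝓝 0)) :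
    Tendsto (fun t : ℝ => t / (1 + t ^ 2)) l (𝓝 0) := by
  -- also at `t = 0`, where `0⁻¹ = 0`
  have hid : (fun t : ℝ => t / (1 + t ^ 2)) = fun t => t⁻¹ / (1 + t⁻¹ ^ 2) := by
    funext t
    rcases eq_or_ne t 0 with rfl | ht
    · simp
    · field_simp
      ring
  have h := hl.div ((hl.pow 2).const_add 1) (by norm_num)
  rw [zero_div] at h
  exact hid ▸ h

lemma hasDerivAt_arctan_sub_div_one_add_sq (t : ℝ) :
    HasDerivAt (fun t => (Real.arctan t - t / (1 + t ^ 2)) / 2) (t ^ 2 / (1 + t ^ 2) ^ 2) t := by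
  have hpos : 0 < 1 + t ^ 2 := by positivity
  have hdiv : HasDerivAt (fun t : ℝ => t / (1 + t ^ 2))
      ((1 * (1 + t ^ 2) - t * (2 * t)) / (1 + t ^ 2) ^ 2) t :=
    (hasDerivAt_id t).div (by simpa using (hasDerivAt_pow 2 t).const_add 1) hpos.ne'
  refine (((Real.hasDerivAt_arctan t).sub hdiv).div_const 2).congr_deriv ?_
  field_simp
  ring

lemma integrable_sq_div_one_add_sq_sq : Integrable fun t : ℝ => t ^ 2 / (1 + t ^ 2) ^ 2 := by
  have hcont : Continuous fun t : ℝ => t ^ 2 / (1 + t ^ 2) ^ 2 :=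
    (continuous_pow 2).div (by fun_prop) fun t => by positivity
  refine integrable_inv_one_add_sq.mono hcont.aestronglyMeasurable (.of_forall fun t => ?_)
  have hpos : 0 < 1 + t ^ 2 := by positivity
  rw [norm_of_nonneg (by positivity), norm_of_nonneg (by positivity), div_le_iff₀ (by positivity),
    sq (1 + t ^ 2), ← mul_assoc, inv_mul_cancel₀ hpos.ne', one_mul]
  linarith

lemma integral_sq_div_one_add_sq_sq : ∫ t : ℝ, t ^ 2 / (1 + t ^ 2) ^ 2 = π / 2 := by
  have hlim {l : Filter ℝ} (hl : Tendsto (fun t : ℝ => t⁻¹) l (𝓝 0)) {a : ℝ}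
      (harctan : Tendsto Real.arctan l (𝓝 a)) :
      Tendsto (fun t => (Real.arctan t - t / (1 + t ^ 2)) / 2) l (𝓝 (a / 2)) := by
    simpa using (harctan.sub (tendsto_div_one_add_sq hl)).div_const 2
  rw [integral_of_hasDerivAt_of_tendsto hasDerivAt_arctan_sub_div_one_add_sq
    integrable_sq_div_one_add_sq_sq
    (hlim tendsto_inv_atBot_zero (tendsto_nhds_of_tendsto_nhdsWithin tendsto_arctan_atBot))
    (hlim tendsto_inv_atTop_zero (tendsto_nhds_of_tendsto_nhdsWithin tendsto_arctan_atTop))]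
  ring

section Scaling

variable (a c : ℝ) {s : ℝ}

lemma div_sq_add_sq_sub_eq_comp_div (hs : s ≠ 0) (t : ℝ) :
    a / (s ^ 2 + t ^ 2) - c * t ^ 2 / (s ^ 2 + t ^ 2) ^ 2 =
      (s ^ 2)⁻¹ * (a * (1 + (t / s) ^ 2)⁻¹ - c * ((t / s) ^ 2 / (1 + (t / s) ^ 2) ^ 2)) := by
  have : s ^ 2 + t ^ 2 ≠ 0 := by positivity
  field_simp

lemma integrable_div_sq_add_sq_sub (hs : s ≠ 0) :
    Integrable fun t : ℝ => a / (s ^ 2 + t ^ 2) - c * t ^ 2 / (s ^ 2 + t ^ 2) ^ 2 := by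
  simp_rw [div_sq_add_sq_sub_eq_comp_div a c hs]
  exact (((integrable_inv_one_add_sq.const_mul a).sub
    (integrable_sq_div_one_add_sq_sq.const_mul c)).comp_div hs).const_mul _

lemma integral_div_sq_add_sq_sub (hs : 0 < s) :
    ∫ t : ℝ, (a / (s ^ 2 + t ^ 2) - c * t ^ 2 / (s ^ 2 + t ^ 2) ^ 2) = (a - c / 2) * π / s := by
  simp_rw [div_sq_add_sq_sub_eq_comp_div a c hs.ne']
  rw [integral_const_mul,
    Measure.integral_comp_div fun u => a * (1 + u ^ 2)⁻¹ - c * (u ^ 2 / (1 + u ^ 2) ^ 2),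
    integral_sub (integrable_inv_one_add_sq.const_mul a)
      (integrable_sq_div_one_add_sq_sq.const_mul c),
    integral_const_mul, integral_const_mul, integral_univ_inv_one_add_sq,
    integral_sq_div_one_add_sq_sq, abs_of_pos hs, smul_eq_mul]
  field_simp

end Scaling

theorem sigma0_K_integral_general (n : ℕ) (V₀ : ℝ) (hV₀ : 0 ≤ V₀)
    (ξ' : Fin (n + 1) → ℝ) (hξ : ξ' ≠ 0) :
    let f : ℝ := (V₀ + 1) / (2 * V₀ + 1)
    let g : ℝ := 1 / (2 * V₀ + 1)
    let eₙ : Fin (n + 1) → ℝ := Pi.single (Fin.last n) 1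
    let q : ℝ := ∑ i, ξ' i ^ 2
    let nrm : ℝ := Real.sqrt q
    ∀ i j : Fin (n + 1),
      (1 / (4 * Real.pi) : ℝ) •
          ∫ t : ℝ,
            (-2 * Complex.I) *
              (((1 / (q + t ^ 2) - 2 * f * t ^ 2 / (q + t ^ 2) ^ 2 : ℝ) : ℂ) *
                  (eₙ i : ℂ) * (ξ' j : ℂ) +
                ((g / (q + t ^ 2) - 2 * f * t ^ 2 / (q + t ^ 2) ^ 2 : ℝ) : ℂ) *
                  (ξ' i : ℂ) * (eₙ j : ℂ))
        = Complex.I * (V₀ : ℂ) / (2 * (2 * (V₀ : ℂ) + 1) * (nrm : ℂ)) *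
            ((ξ' i : ℂ) * (eₙ j : ℂ) - (eₙ i : ℂ) * (ξ' j : ℂ)) := by
  intro f g eₙ q nrm i j
  have hq : 0 < q := by
    obtain ⟨k, hk⟩ := Function.ne_iff.1 hξ
    exact Finset.sum_pos' (fun i _ => sq_nonneg _) ⟨k, Finset.mem_univ k, pow_two_pos_of_ne_zero hk⟩
  have hnrm : 0 < nrm := Real.sqrt_pos.2 hq
  have hq_sq : q = nrm ^ 2 := (Real.sq_sqrt hq.le).symm
  have hA := integrable_div_sq_add_sq_sub 1 (2 * f) hnrm.ne'
  have hB := integrable_div_sq_add_sq_sub g (2 * f) hnrm.ne'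
  rw [hq_sq, integral_const_mul, integral_add, integral_mul_const, integral_mul_const,
    integral_mul_const, integral_mul_const, integral_complex_ofReal, integral_complex_ofReal,
    integral_div_sq_add_sq_sub _ _ hnrm, integral_div_sq_add_sq_sub _ _ hnrm]
  · have hV : 2 * V₀ + 1 ≠ 0 := by positivity
    have h1f : 1 - 2 * f / 2 = V₀ / (2 * V₀ + 1) := by simp only [f]; field_simp; ring
    have hgf : g - 2 * f / 2 = -(V₀ / (2 * V₀ + 1)) := by simp only [f, g]; field_simp; ring
    rw [h1f, hgf, Complex.real_smul]
    push_cast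
    field_simp
    ring
  · exact (hA.ofReal.mul_const _).mul_const _
  · exact (hB.ofReal.mul_const _).mul_const _

/-- The computation of `σ₀(K)` in Theorem `thm.K1`, stated entrywise. -/
theorem sigma0_K_integral (n : ℕ) (V₀ : ℝ) (hV₀ : 0 ≤ V₀)
    (ξ' : Fin (n + 1) → ℝ) (hξlast : ξ' (Fin.last n) = 0) (hξ : ξ' ≠ 0) :
    let f : ℝ := (V₀ + 1) / (2 * V₀ + 1)
    let g : ℝ := 1 / (2 * V₀ + 1)
    let eₙ : Fin (n + 1) → ℝ := Pi.single (Fin.last n) 1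
    let q : ℝ := ∑ i, ξ' i ^ 2
    let nrm : ℝ := Real.sqrt q
    ∀ i j : Fin (n + 1),
      (1 / (4 * Real.pi) : ℝ) •
          ∫ t : ℝ,
            (-2 * Complex.I) *
              (((1 / (q + t ^ 2) - 2 * f * t ^ 2 / (q + t ^ 2) ^ 2 : ℝ) : ℂ) *
                  (eₙ i : ℂ) * (ξ' j : ℂ) +
                ((g / (q + t ^ 2) - 2 * f * t ^ 2 / (q + t ^ 2) ^ 2 : ℝ) : ℂ) *
                  (ξ' i : ℂ) * (eₙ j : ℂ))
        = Complex.I * (V₀ : ℂ) / (2 * (2 * (V₀ : ℂ) + 1) * (nrm : ℂ)) *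
            ((ξ' i : ℂ) * (eₙ j : ℂ) - (eₙ i : ℂ) * (ξ' j : ℂ)) :=
  sigma0_K_integral_general n V₀ hV₀ ξ' hξ
end

section
/- Let ξ' ∈ ℝⁿ⁻¹ be nonzero, ν a unit vector orthogonal to ξ', and f := (V₀+1)/(2V₀+1) with V₀ ≥ 0. Then (1/(2π)) ∫_ℝ [ 1/(|ξ'|²+t²) · Id − f/(|ξ'|²+t²)² · (ξ'♯⊗ξ' ) − f t²/(|ξ'|²+t²)² · (ν⊗ν♯) ] dt = (1/(2|ξ'|))·Id − (f/(4|ξ'|³))·ξ'♯⊗ξ' − (f/(4|ξ'|))·ν⊗ν♯, and this operator is self-adjoint and positive definite (hence invertible) when 0 ≤ f ≤ 1. -/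
/-!
With `a = |ξ'|`, every entry of the integrand is a combination of `(a² + t²)⁻¹`, `(a² + t²)⁻²`
and `t² (a² + t²)⁻²`, whose integrals over `ℝ` are `π / a`, `π / (2a³)` and `π / (2a)`.
For `x ≠ 0` the quadratic form of the resulting matrix is
`|x|² / (2a) - (f / (4a)) ((ξ' ⬝ x)² / a² + (ν ⬝ x)²)`; Bessel's inequality for the orthonormal
pair `ξ' / a, ν` bounds the bracket by `|x|²`, so the form is at least `(2 - f) |x|² / (4a) > 0`.
-/

open MeasureTheory Real Filter Topology Matrix

theorem integrable_inv_sq_add_sq {a : ℝ} (ha : a ≠ 0) :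
    Integrable fun t : ℝ => (a ^ 2 + t ^ 2)⁻¹ := by
  refine ((integrable_inv_one_add_sq.comp_div ha).const_mul (a ^ 2)⁻¹).congr
    (.of_forall fun t => ?_)
  field_simp

theorem integral_univ_inv_sq_add_sq {a : ℝ} (ha : 0 < a) :
    ∫ t : ℝ, (a ^ 2 + t ^ 2)⁻¹ = π / a := calc
  _ = ∫ t : ℝ, (a ^ 2)⁻¹ * (1 + (t / a) ^ 2)⁻¹ := by congr 1; ext t; field_simp
  _ = π / a := by
    rw [integral_const_mul, Measure.integral_comp_div (fun t => (1 + t ^ 2)⁻¹),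
      integral_univ_inv_one_add_sq, abs_of_pos ha, smul_eq_mul]
    field_simp

theorem integrable_inv_sq_add_sq_sq {a : ℝ} (ha : a ≠ 0) :
    Integrable fun t : ℝ => ((a ^ 2 + t ^ 2) ^ 2)⁻¹ := by
  refine ((integrable_inv_sq_add_sq ha).const_mul (a ^ 2)⁻¹).mono'
    ((Continuous.inv₀ (by fun_prop) fun t => by positivity).aestronglyMeasurable)
    (.of_forall fun t => ?_)
  rw [norm_of_nonneg (by positivity), ← mul_inv, sq (a ^ 2 + t ^ 2)]
  gcongr
  nlinarith [sq_nonneg t]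

theorem tendsto_div_sq_add_sq_cocompact (a : ℝ) :
    Tendsto (fun t : ℝ => t / (a ^ 2 + t ^ 2)) (cocompact ℝ) (𝓝 0) := by
  have hnorm : Tendsto (fun t : ℝ => ‖t‖⁻¹) (cocompact ℝ) (𝓝 0) :=
    tendsto_inv_atTop_zero.comp tendsto_norm_cocompact_atTop
  refine squeeze_zero_norm (fun t => ?_) hnorm
  rcases eq_or_ne t 0 with rfl | ht
  · simp
  rw [norm_div, norm_of_nonneg (by positivity : 0 ≤ a ^ 2 + t ^ 2),
    div_le_iff₀ (by positivity), Real.norm_eq_abs, ← sq_abs t]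
  field_simp
  nlinarith [sq_nonneg a, abs_pos.2 ht]

theorem integral_univ_inv_sq_add_sq_sq {a : ℝ} (ha : 0 < a) :
    ∫ t : ℝ, ((a ^ 2 + t ^ 2) ^ 2)⁻¹ = π / (2 * a ^ 3) := by
  -- `t / (a² + t²)` vanishes at `±∞`, so its derivative integrates to `0`.
  have hderiv : ∀ t : ℝ, HasDerivAt (fun t => t / (a ^ 2 + t ^ 2))
      (2 * a ^ 2 * ((a ^ 2 + t ^ 2) ^ 2)⁻¹ - (a ^ 2 + t ^ 2)⁻¹) t := fun t => by
    have hpos : a ^ 2 + t ^ 2 ≠ 0 := by positivity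
    have h : HasDerivAt (fun t : ℝ => t / (a ^ 2 + t ^ 2))
        ((1 * (a ^ 2 + t ^ 2) - t * (2 * t)) / (a ^ 2 + t ^ 2) ^ 2) t :=
      (hasDerivAt_id t).div (by simpa using (hasDerivAt_pow 2 t).const_add (a ^ 2)) hpos
    refine h.congr_deriv ?_
    field_simp
    ring
  have hzero := integral_of_hasDerivAt_of_tendsto hderiv
    (((integrable_inv_sq_add_sq_sq ha.ne').const_mul _).sub (integrable_inv_sq_add_sq ha.ne'))
    ((tendsto_div_sq_add_sq_cocompact a).mono_left atBot_le_cocompact)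
    ((tendsto_div_sq_add_sq_cocompact a).mono_left atTop_le_cocompact)
  rw [integral_sub ((integrable_inv_sq_add_sq_sq ha.ne').const_mul _)
    (integrable_inv_sq_add_sq ha.ne'), integral_const_mul, integral_univ_inv_sq_add_sq ha,
    sub_self, sub_eq_zero, eq_div_iff ha.ne'] at hzero
  rw [eq_div_iff (by positivity)]
  linear_combination hzero

theorem sq_div_sq_add_sq_sq_eq {a t : ℝ} (ha : a ≠ 0) :
    t ^ 2 / (a ^ 2 + t ^ 2) ^ 2 = (a ^ 2 + t ^ 2)⁻¹ - a ^ 2 * ((a ^ 2 + t ^ 2) ^ 2)⁻¹ := by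
  field_simp
  ring

theorem integrable_sq_div_sq_add_sq_sq {a : ℝ} (ha : a ≠ 0) :
    Integrable fun t : ℝ => t ^ 2 / (a ^ 2 + t ^ 2) ^ 2 := by
  simp_rw [sq_div_sq_add_sq_sq_eq ha]
  exact (integrable_inv_sq_add_sq ha).sub ((integrable_inv_sq_add_sq_sq ha).const_mul _)

theorem integral_univ_sq_div_sq_add_sq_sq {a : ℝ} (ha : 0 < a) :
    ∫ t : ℝ, t ^ 2 / (a ^ 2 + t ^ 2) ^ 2 = π / (2 * a) := by
  simp_rw [sq_div_sq_add_sq_sq_eq ha.ne']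
  rw [integral_sub (integrable_inv_sq_add_sq ha.ne')
    ((integrable_inv_sq_add_sq_sq ha.ne').const_mul _), integral_const_mul,
    integral_univ_inv_sq_add_sq ha, integral_univ_inv_sq_add_sq_sq ha]
  field_simp
  ring

theorem inv_two_pi_mul_integral_symbol_entry {a : ℝ} (ha : 0 < a) (c d u v : ℝ) :
    (1 / (2 * π)) * ∫ t : ℝ, (1 / (a ^ 2 + t ^ 2)) * d - (c / (a ^ 2 + t ^ 2) ^ 2) * u
        - (c * t ^ 2 / (a ^ 2 + t ^ 2) ^ 2) * v
      = (1 / (2 * a)) * d - (c / (4 * a ^ 3)) * u - (c / (4 * a)) * v := by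
  have h₁ := (integrable_inv_sq_add_sq ha.ne').mul_const d
  have h₂ := (integrable_inv_sq_add_sq_sq ha.ne').mul_const (c * u)
  have h₃ := (integrable_sq_div_sq_add_sq_sq ha.ne').mul_const (c * v)
  have hsplit : (fun t : ℝ => (1 / (a ^ 2 + t ^ 2)) * d - (c / (a ^ 2 + t ^ 2) ^ 2) * u
      - (c * t ^ 2 / (a ^ 2 + t ^ 2) ^ 2) * v) = fun t => (a ^ 2 + t ^ 2)⁻¹ * d
        - ((a ^ 2 + t ^ 2) ^ 2)⁻¹ * (c * u) - t ^ 2 / (a ^ 2 + t ^ 2) ^ 2 * (c * v) := by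
    ext t; ring
  rw [hsplit, integral_sub (by exact h₁.sub h₂) h₃, integral_sub h₁ h₂, integral_mul_const,
    integral_mul_const, integral_mul_const, integral_univ_inv_sq_add_sq ha,
    integral_univ_inv_sq_add_sq_sq ha, integral_univ_sq_div_sq_add_sq_sq ha]
  field_simp
  ring

section Quadratic

variable {ι : Type*} [Fintype ι]

theorem sq_dotProduct_div_add_sq_dotProduct_le {ξ ν : ι → ℝ} (hξ : 0 < ξ ⬝ᵥ ξ)
    (hν : ν ⬝ᵥ ν = 1) (horth : ξ ⬝ᵥ ν = 0) (x : ι → ℝ) :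
    (ξ ⬝ᵥ x) ^ 2 / (ξ ⬝ᵥ ξ) + (ν ⬝ᵥ x) ^ 2 ≤ x ⬝ᵥ x := by
  set y := x - ((ξ ⬝ᵥ x) / (ξ ⬝ᵥ ξ)) • ξ - (ν ⬝ᵥ x) • ν
  have hνξ : ν ⬝ᵥ ξ = 0 := by rwa [dotProduct_comm]
  have hy : y ⬝ᵥ y = x ⬝ᵥ x - ((ξ ⬝ᵥ x) ^ 2 / (ξ ⬝ᵥ ξ) + (ν ⬝ᵥ x) ^ 2) := by
    simp only [y, dotProduct_sub, sub_dotProduct, dotProduct_smul, smul_dotProduct, smul_eq_mul,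
      hν, horth, hνξ, dotProduct_comm x]
    field_simp
    ring
  exact sub_nonneg.mp (hy ▸ Finset.sum_nonneg fun i _ => mul_self_nonneg (y i))

variable [DecidableEq ι]

theorem dotProduct_mulVec_smul_one_sub_vecMulVec (c d e : ℝ) (ξ ν x : ι → ℝ) :
    x ⬝ᵥ ((c • 1 - d • vecMulVec ξ ξ - e • vecMulVec ν ν) *ᵥ x)
      = c * (x ⬝ᵥ x) - d * (ξ ⬝ᵥ x) ^ 2 - e * (ν ⬝ᵥ x) ^ 2 := by
  simp only [sub_mulVec, smul_mulVec, one_mulVec, vecMulVec_mulVec, dotProduct_sub, dotProduct_smul,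
    op_smul_eq_smul, smul_eq_mul, dotProduct_comm x ξ, dotProduct_comm x ν]
  ring

theorem posDef_smul_one_sub_vecMulVec {ξ ν : ι → ℝ} (hξ : 0 < ξ ⬝ᵥ ξ)
    (hν : ν ⬝ᵥ ν = 1) (horth : ξ ⬝ᵥ ν = 0) {c d : ℝ} (hd : 0 ≤ d) (hdc : d < c) :
    (c • 1 - (d / (ξ ⬝ᵥ ξ)) • vecMulVec ξ ξ - d • vecMulVec ν ν).PosDef := by
  refine .of_dotProduct_mulVec_pos ?_ fun x hx => ?_
  · rw [isHermitian_iff_isSymm]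
    ext i j
    simp [vecMulVec_apply, one_apply, eq_comm, mul_comm]
  · have hxx : 0 < x ⬝ᵥ x := by simpa using dotProduct_star_self_pos_iff.mpr hx
    have hbessel := sq_dotProduct_div_add_sq_dotProduct_le hξ hν horth x
    rw [star_trivial, dotProduct_mulVec_smul_one_sub_vecMulVec, sub_sub, sub_pos]
    calc d / (ξ ⬝ᵥ ξ) * (ξ ⬝ᵥ x) ^ 2 + d * (ν ⬝ᵥ x) ^ 2
        = d * ((ξ ⬝ᵥ x) ^ 2 / (ξ ⬝ᵥ ξ) + (ν ⬝ᵥ x) ^ 2) := by ring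
      _ ≤ d * (x ⬝ᵥ x) := mul_le_mul_of_nonneg_left hbessel hd
      _ < c * (x ⬝ᵥ x) := mul_lt_mul_of_pos_right hdc hxx

end Quadratic

theorem sigma_S_integral_and_posDef_general (n : ℕ) (V₀ : ℝ)
    (ξ' ν : Fin n → ℝ) (hξ : ξ' ≠ 0) (hν : ∑ i, ν i ^ 2 = 1)
    (horth : ∑ i, ξ' i * ν i = 0) :
    let f : ℝ := (V₀ + 1) / (2 * V₀ + 1)
    let q : ℝ := ∑ i, ξ' i ^ 2
    let nrm : ℝ := Real.sqrt q
    let M : Matrix (Fin n) (Fin n) ℝ :=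
      Matrix.of fun i j =>
        (1 / (2 * nrm)) * (if i = j then 1 else 0)
          - (f / (4 * nrm ^ 3)) * (ξ' i * ξ' j)
          - (f / (4 * nrm)) * (ν i * ν j)
    (∀ i j : Fin n,
        (1 / (2 * Real.pi)) *
            ∫ t : ℝ,
              (1 / (q + t ^ 2)) * (if i = j then (1 : ℝ) else 0)
                - (f / (q + t ^ 2) ^ 2) * (ξ' i * ξ' j)
                - (f * t ^ 2 / (q + t ^ 2) ^ 2) * (ν i * ν j)
          = M i j) ∧
    (0 ≤ f → f ≤ 1 → M.IsSymm ∧ M.PosDef ∧ IsUnit M) := by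
  intro f q nrm M
  have hq_dot : q = ξ' ⬝ᵥ ξ' := by simp only [q, dotProduct, sq]
  have hq : 0 < q := hq_dot ▸ by simpa using dotProduct_star_self_pos_iff.mpr hξ
  have hnrm : 0 < nrm := Real.sqrt_pos.2 hq
  have hq_nrm : q = nrm ^ 2 := (Real.sq_sqrt hq.le).symm
  refine ⟨fun i j => ?_, fun hf₀ hf₁ => ?_⟩
  · rw [hq_nrm]
    exact inv_two_pi_mul_integral_symbol_entry hnrm f _ _ _
  have hM : M = (1 / (2 * nrm)) • 1 - (f / (4 * nrm) / (ξ' ⬝ᵥ ξ')) • vecMulVec ξ' ξ'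
      - (f / (4 * nrm)) • vecMulVec ν ν := by
    ext i j
    rw [← hq_dot, hq_nrm]
    simp only [M, of_apply, Matrix.sub_apply, Matrix.smul_apply, one_apply, vecMulVec_apply,
      smul_eq_mul]
    ring
  have hPD : M.PosDef := hM ▸ posDef_smul_one_sub_vecMulVec (hq_dot ▸ hq)
    (by simpa only [dotProduct, sq] using hν) (by simpa only [dotProduct] using horth)
    (by positivity) (by rw [div_lt_div_iff₀ (by positivity) (by positivity)]; nlinarith)
  exact ⟨isHermitian_iff_isSymm.mp hPD.isHermitian, hPD, hPD.isUnit⟩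

/-- The principal symbol `σ₋₁(S)` of the boundary single layer operator
(Theorem `thm.jump.rel`(1)) and its ellipticity. -/
theorem sigma_S_integral_and_posDef (n : ℕ) (V₀ : ℝ) (hV₀ : 0 ≤ V₀)
    (ξ' ν : Fin n → ℝ) (hξ : ξ' ≠ 0) (hν : ∑ i, ν i ^ 2 = 1)
    (horth : ∑ i, ξ' i * ν i = 0) :
    let f : ℝ := (V₀ + 1) / (2 * V₀ + 1)
    let q : ℝ := ∑ i, ξ' i ^ 2
    let nrm : ℝ := Real.sqrt q
    let M : Matrix (Fin n) (Fin n) ℝ :=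
      Matrix.of fun i j =>
        (1 / (2 * nrm)) * (if i = j then 1 else 0)
          - (f / (4 * nrm ^ 3)) * (ξ' i * ξ' j)
          - (f / (4 * nrm)) * (ν i * ν j)
    (∀ i j : Fin n,
        (1 / (2 * Real.pi)) *
            ∫ t : ℝ,
              (1 / (q + t ^ 2)) * (if i = j then (1 : ℝ) else 0)
                - (f / (q + t ^ 2) ^ 2) * (ξ' i * ξ' j)
                - (f * t ^ 2 / (q + t ^ 2) ^ 2) * (ν i * ν j)
          = M i j) ∧
    (0 ≤ f → f ≤ 1 → M.IsSymm ∧ M.PosDef ∧ IsUnit M) :=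
  sigma_S_integral_and_posDef_general n V₀ ξ' ν hξ hν horth
end
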